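/- Let α > 0 and K ∈ (0,1), and let R_{α,K} be the corresponding map. Then the iterates R_{α,K}^n(3/4) converge to 1/2 as n → ∞. -/
import Mathlib


/-- Left branch of the LSV-type maps: `x ↦ x(1 + 2^α x^α)`. -/
noncomputable def lsvLeft (α x : ℝ) : ℝ := x * (1 + 2 ^ α * x ^ α)

/-- The map `R_{α,K}`. -/
noncomputable def rMap (α K : ℝ) (x : ℝ) : ℝ :=
  if x ≤ 1 / 2 then lsvLeft α x
  else 1 / 2 + K * (x - 1 / 2) + 2 * (1 - K) * (x - 1 / 2) ^ 2

/-- The iterates `R_{α,K}^n(3/4)` converge to `1/2`. -/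
theorem rMap_iterate_tendsto
    (α K : ℝ) (hα : 0 < α) (hK : K ∈ Set.Ioo (0 : ℝ) 1) :
    Filter.Tendsto (fun n => (rMap α K)^[n] (3 / 4)) Filter.atTop (nhds (1 / 2)) := by
  obtain ⟨hK0, hK1⟩ := hK
  set c : ℝ := (1 + K) / 2 with hc
  have hc0 : 0 < c := by positivity
  have hc1 : c < 1 := by simp only [hc]; linarith
  have key : ∀ n : ℕ, 1 / 2 < (rMap α K)^[n] (3 / 4) ∧
      (rMap α K)^[n] (3 / 4) - 1 / 2 ≤ (1 / 4) * c ^ n := by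
    intro n
    induction n with
    | zero => norm_num
    | succ n ih =>
      obtain ⟨h1, h2⟩ := ih
      set x := (rMap α K)^[n] (3 / 4) with hx
      have hcn1 : c ^ n ≤ 1 := pow_le_one₀ hc0.le hc1.le
      have hy4 : x - 1 / 2 ≤ 1 / 4 := by nlinarith
      have hy0 : 0 < x - 1 / 2 := by linarith
      rw [Function.iterate_succ_apply', ← hx]
      have hrw : rMap α K x = 1 / 2 + K * (x - 1 / 2) + 2 * (1 - K) * (x - 1 / 2) ^ 2 := by
        rw [rMap, if_neg (by linarith)]
      constructor
      · rw [hrw]; nlinarith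
      · rw [hrw]
        have step : K * (x - 1 / 2) + 2 * (1 - K) * (x - 1 / 2) ^ 2 ≤ c * (x - 1 / 2) := by
          have : 2 * (1 - K) * (x - 1 / 2) ^ 2 ≤ ((1 - K) / 2) * (x - 1 / 2) := by
            nlinarith [mul_nonneg (mul_nonneg (by linarith : (0:ℝ) ≤ 1 - K) hy0.le)
              (by linarith : (0:ℝ) ≤ 1 / 4 - (x - 1 / 2))]
          simp only [hc]; nlinarith
        have : c * (x - 1 / 2) ≤ c * ((1 / 4) * c ^ n) :=
          mul_le_mul_of_nonneg_left h2 hc0.le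
        calc 1 / 2 + K * (x - 1 / 2) + 2 * (1 - K) * (x - 1 / 2) ^ 2 - 1 / 2
            ≤ c * (x - 1 / 2) := by linarith
          _ ≤ (1 / 4) * c ^ (n + 1) := by rw [pow_succ]; nlinarith
  have hlim : Filter.Tendsto (fun n : ℕ => 1 / 2 + (1 / 4) * c ^ n)
      Filter.atTop (nhds (1 / 2)) := by
    have := (tendsto_pow_atTop_nhds_zero_of_lt_one hc0.le hc1).const_mul (1 / 4)
    have := (this.const_add (1 / 2 : ℝ))
    simpa using this
  refine tendsto_of_tendsto_of_tendsto_of_le_of_le tendsto_const_nhds hlim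
    (fun n => (key n).1.le) (fun n => ?_)
  have := (key n).2
  linarith
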